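/- For every regular expression α, a word w ∈ Σ* belongs to L(α) if and only if ε ∈ L(β) for some β ∈ ∂_w(α). -/

import Mathlib

open RegularExpression
open scoped Classical

variable {σ : Type*}

/-- `S ⊙ β`: append `β` on the right to every element of `S`, with `S ⊙ ∅ = ∅`. -/
noncomputable def odot (S : Finset (RegularExpression σ)) (β : RegularExpression σ) :
    Finset (RegularExpression σ) :=
  if β = zero then ∅ else S.image (fun γ => comp γ β)

/-- Antimirov's partial derivative of a regular expression w.r.t. a letter. -/
noncomputable def pd (a : σ) : RegularExpression σ → Finset (RegularExpression σ)
  | zero => ∅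
  | epsilon => ∅
  | char b => if b = a then {epsilon} else ∅
  | plus P Q => pd a P ∪ pd a Q
  | comp P Q =>
      if [] ∈ P.matches' then odot (pd a P) Q ∪ pd a Q else odot (pd a P) Q
  | RegularExpression.star P => odot (pd a P) (RegularExpression.star P)

/-- Partial derivative of a finite set of regular expressions w.r.t. a letter. -/
noncomputable def pdSet (a : σ) (S : Finset (RegularExpression σ)) :
    Finset (RegularExpression σ) :=
  S.biUnion (pd a)

/-- Partial derivatives w.r.t. a word: `∂_ε(α) = {α}`, `∂_{wσ}(α) = ∂_σ(∂_w(α))`. -/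
noncomputable def pdWord (α : RegularExpression σ) (w : List σ) :
    Finset (RegularExpression σ) :=
  w.foldl (fun S a => pdSet a S) {α}

/-- The set of all partial derivatives of `α`. -/
def PD (α : RegularExpression σ) : Set (RegularExpression σ) :=
  {β | ∃ w : List σ, β ∈ pdWord α w}

/-- Alphabetic size: number of letter occurrences. -/
def alph : RegularExpression σ → ℕ
  | zero => 0
  | epsilon => 0
  | char _ => 1
  | plus P Q => alph P + alph Q
  | comp P Q => alph P + alph Q
  | RegularExpression.star P => alph P

/-- The language of a finite set of regular expressions. -/
def langOf (S : Finset (RegularExpression σ)) : Language σ :=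
  {w | ∃ β ∈ S, w ∈ β.matches'}

/-!
Antimirov's partial derivatives split Brzozowski's derivative into summands: clause by clause,
the union of the languages of `∂_a(α)` is the language of `α.deriv a`, i.e. the left quotient
of `L(α)` by `a`.  Iterating along `w`, the union of the languages of `∂_w(α)` is
the left quotient of `L(α)` by `w`, which contains `ε` iff `w ∈ L(α)`.
-/

namespace RegularExpression

theorem mem_matches'_deriv_iff [DecidableEq σ] (P : RegularExpression σ) (a : σ) (w : List σ) :
    w ∈ (P.deriv a).matches' ↔ a :: w ∈ P.matches' := by
  rw [← rmatch_iff_matches', ← rmatch_iff_matches', rmatch]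

theorem matchEpsilon_iff_nil_mem_matches' [DecidableEq σ] (P : RegularExpression σ) :
    P.matchEpsilon ↔ [] ∈ P.matches' := by
  rw [← rmatch_iff_matches', rmatch]

end RegularExpression

theorem mem_langOf {S : Finset (RegularExpression σ)} {w : List σ} :
    w ∈ langOf S ↔ ∃ β ∈ S, w ∈ β.matches' :=
  Iff.rfl

theorem langOf_empty : langOf (∅ : Finset (RegularExpression σ)) = 0 := by
  ext w; simp [mem_langOf, Language.notMem_zero]

theorem langOf_singleton (β : RegularExpression σ) : langOf {β} = β.matches' := by
  ext w; simp [mem_langOf]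

theorem langOf_union (S T : Finset (RegularExpression σ)) :
    langOf (S ∪ T) = langOf S + langOf T := by
  ext w; simp [mem_langOf, Language.mem_add, or_and_right, exists_or]

theorem langOf_odot (S : Finset (RegularExpression σ)) (β : RegularExpression σ) :
    langOf (odot S β) = langOf S * β.matches' := by
  unfold odot
  split_ifs with hβ
  · rw [hβ, langOf_empty, zero_def, matches'_zero, mul_zero]
  · ext w
    simp only [mem_langOf, Finset.mem_image, exists_exists_and_eq_and, comp_def, matches'_mul,
      Language.mem_mul]
    constructor
    · rintro ⟨γ, hγ, u, hu, v, hv, rfl⟩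
      exact ⟨u, ⟨γ, hγ, hu⟩, v, hv, rfl⟩
    · rintro ⟨u, ⟨γ, hγ, hu⟩, v, hv, rfl⟩
      exact ⟨γ, hγ, u, hu, v, hv, rfl⟩

theorem langOf_pd [DecidableEq σ] (a : σ) (α : RegularExpression σ) :
    langOf (pd a α) = (α.deriv a).matches' := by
  induction α with
  | zero => exact langOf_empty
  | epsilon => exact langOf_empty
  | char b =>
    simp only [pd, RegularExpression.deriv]
    split_ifs
    · exact langOf_singleton _
    · exact langOf_empty
  | plus P Q ihP ihQ => rw [pd, langOf_union, ihP, ihQ]; rfl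
  | comp P Q ihP ihQ =>
    simp only [pd, RegularExpression.deriv, ← matchEpsilon_iff_nil_mem_matches']
    split_ifs
    · rw [langOf_union, langOf_odot, ihP, ihQ]; rfl
    · rw [langOf_odot, ihP]; rfl
  | star P ihP => rw [pd, langOf_odot, ihP]; rfl

theorem langOf_pdSet (a : σ) (S : Finset (RegularExpression σ)) :
    langOf (pdSet a S) = (langOf S).leftQuotient [a] := by
  ext w
  simp only [Language.mem_leftQuotient, List.singleton_append, ← mem_matches'_deriv_iff,
    ← langOf_pd, mem_langOf, pdSet, Finset.mem_biUnion]
  constructor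
  · rintro ⟨β, ⟨γ, hγ, hβ⟩, hw⟩
    exact ⟨γ, hγ, β, hβ, hw⟩
  · rintro ⟨γ, hγ, β, hβ, hw⟩
    exact ⟨β, ⟨γ, hγ, hβ⟩, hw⟩

theorem langOf_foldl_pdSet (w : List σ) (S : Finset (RegularExpression σ)) :
    langOf (w.foldl (fun S a => pdSet a S) S) = (langOf S).leftQuotient w := by
  induction w generalizing S with
  | nil => rfl
  | cons a w ih => rw [List.foldl_cons, ih, langOf_pdSet, ← Language.leftQuotient_append]; rfl

/-- `w ∈ L(α)` iff some partial derivative of `α` w.r.t. `w` accepts `ε`. -/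
theorem mem_matches_iff_pdWord (α : RegularExpression σ) (w : List σ) :
    w ∈ α.matches' ↔ ∃ β ∈ pdWord α w, [] ∈ β.matches' := by
  change w ∈ α.matches' ↔ [] ∈ langOf (pdWord α w)
  rw [pdWord, langOf_foldl_pdSet, Language.mem_leftQuotient, List.append_nil, langOf_singleton]
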